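/- arXiv:math/0611661 — 4 statements merged into one kernel-verified Lean document; each statement's English description precedes it below -/
import Mathlib

section
/- Let R be a Prüfer domain with the strong factorization property, M a maximal ideal of R, and A a divisorial ideal of the localization R_M. Then A ∩ R is a divisorial ideal of R. -/
open scoped nonZeroDivisors

noncomputable section

variable (R : Type*) [CommRing R] [IsDomain R]

abbrev LocAt (M : Ideal R) (hM : M.IsPrime) : Type _ :=
  Localization (@Ideal.primeCompl R _ M hM)

def MapAt (M : Ideal R) (hM : M.IsPrime) (I : Ideal R) : Ideal (LocAt R M hM) :=
  I.map (algebraMap R (LocAt R M hM))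

def divClos (I : Ideal R) : FractionalIdeal R⁰ (FractionRing R) :=
  1 / (1 / (I : FractionalIdeal R⁰ (FractionRing R)))

def Divisorial (I : Ideal R) : Prop :=
  divClos R I = (I : FractionalIdeal R⁰ (FractionRing R))

def DivisorialLoc (M : Ideal R) (hM : M.IsPrime) (A : Ideal (LocAt R M hM)) : Prop :=
  haveI : IsDomain (LocAt R M hM) :=
    IsLocalization.isDomain_localization (@Ideal.primeCompl_le_nonZeroDivisors R _ _ M hM)
  Divisorial (LocAt R M hM) A

def DivisorialAt (M : Ideal R) (hM : M.IsPrime) (I : Ideal R) : Prop :=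
  DivisorialLoc R M hM (MapAt R M hM I)

def IsPruferDomain : Prop :=
  ∀ I : Ideal R, I ≠ ⊥ → I.FG → IsUnit (I : FractionalIdeal R⁰ (FractionRing R))

def FiniteCharacter : Prop :=
  ∀ x : R, x ≠ 0 → {M : Ideal R | M.IsMaximal ∧ x ∈ M}.Finite

def HLocal : Prop :=
  FiniteCharacter R ∧
    ∀ P : Ideal R, P.IsPrime → P ≠ ⊥ → ∃! M : Ideal R, M.IsMaximal ∧ P ≤ M

def WeakFactorization : Prop :=
  ∀ I : Ideal R, I ≠ ⊥ → ∃ l : Multiset (Ideal R), (∀ M ∈ l, M.IsMaximal) ∧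
    (I : FractionalIdeal R⁰ (FractionRing R)) =
      divClos R I * (l.map (fun M => (M : FractionalIdeal R⁰ (FractionRing R)))).prod

def MSet (I : Ideal R) : Set (Ideal R) :=
  {M | ∃ h : M.IsMaximal, I ≤ M ∧ ¬ Divisorial R M ∧ ¬ DivisorialAt R M h.isPrime I}

def StrongFactorization : Prop :=
  letI := Classical.decEq (Ideal R)
  ∀ I : Ideal R, I ≠ ⊥ → ∃ S : Finset (Ideal R), ↑S = MSet R I ∧
    (I : FractionalIdeal R⁰ (FractionRing R)) =
      divClos R I * ∏ M ∈ S, (M : FractionalIdeal R⁰ (FractionRing R)) ∧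
    ∀ M ∈ S, (I : FractionalIdeal R⁰ (FractionRing R)) ≠
      divClos R I * ∏ N ∈ S.erase M, (N : FractionalIdeal R⁰ (FractionRing R))

def AlmostDedekind : Prop :=
  ∀ (M : Ideal R) (hM : M.IsMaximal),
    haveI : IsDomain (LocAt R M hM.isPrime) :=
      IsLocalization.isDomain_localization
        (@Ideal.primeCompl_le_nonZeroDivisors R _ _ M hM.isPrime)
    IsDiscreteValuationRing (LocAt R M hM.isPrime)

def vIdeal (I : Ideal R) : Ideal R :=
  Submodule.comap (Algebra.linearMap R (FractionRing R))
    (divClos R I : Submodule R (FractionRing R))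

def traceIdeal (I : Ideal R) : Ideal R :=
  Submodule.comap (Algebra.linearMap R (FractionRing R))
    (((I : FractionalIdeal R⁰ (FractionRing R)) *
        (1 / (I : FractionalIdeal R⁰ (FractionRing R))) :
      FractionalIdeal R⁰ (FractionRing R)) : Submodule R (FractionRing R))
-- auxiliary lemmas

lemma divClos_bot : divClos R ⊥ = ((⊥ : Ideal R) : FractionalIdeal R⁰ (FractionRing R)) := by
  rw [divClos, FractionalIdeal.coeIdeal_bot, FractionalIdeal.div_zero, FractionalIdeal.div_zero]

lemma divClos_le_one (I : Ideal R) (hI : I ≠ ⊥) :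
    divClos R I ≤ 1 := by
  have hI0 : (I : FractionalIdeal R⁰ (FractionRing R)) ≠ 0 := by
    simpa [FractionalIdeal.coeIdeal_eq_zero] using hI
  have h1 : (1 : FractionalIdeal R⁰ (FractionRing R)) ≤ 1 / (I : FractionalIdeal R⁰ (FractionRing R)) := by
    rw [FractionalIdeal.le_div_iff_mul_le hI0, one_mul]
    exact FractionalIdeal.coeIdeal_le_one
  have h2 : (1 / (I : FractionalIdeal R⁰ (FractionRing R))) ≠ 0 := by
    intro h
    rw [h] at h1
    exact one_ne_zero (le_antisymm h1 (FractionalIdeal.zero_le _))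
  have h3 : divClos R I * (1 / (I : FractionalIdeal R⁰ (FractionRing R))) ≤ 1 :=
    (FractionalIdeal.le_div_iff_mul_le h2).mp le_rfl
  calc divClos R I = divClos R I * 1 := (mul_one _).symm
    _ ≤ divClos R I * (1 / (I : FractionalIdeal R⁰ (FractionRing R))) := by
        exact mul_le_mul_right h1 _
    _ ≤ 1 := h3

/-- In a Prüfer domain with the strong factorization property, the contraction of a
divisorial ideal of `R_M` is divisorial in `R`. -/
theorem stmt10 (hR : IsPruferDomain R) (hS : StrongFactorization R)
    (M : Ideal R) (hM : M.IsMaximal) (A : Ideal (LocAt R M hM.isPrime))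
    (hA : DivisorialLoc R M hM.isPrime A) :
    Divisorial R (A.comap (algebraMap R (LocAt R M hM.isPrime))) := by
  classical
  set I : Ideal R := A.comap (algebraMap R (LocAt R M hM.isPrime)) with hIdef
  by_cases hI0 : I = ⊥
  · rw [hI0]
    exact divClos_bot R
  · obtain ⟨S, hScoe, hfac, -⟩ := hS I hI0
    obtain ⟨J, hJ⟩ := FractionalIdeal.le_one_iff_exists_coeIdeal.mp (divClos_le_one R I hI0)
    have hprod : ((J * ∏ N ∈ S, N : Ideal R) : FractionalIdeal R⁰ (FractionRing R))
        = (J : FractionalIdeal R⁰ (FractionRing R)) *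
          ∏ N ∈ S, (N : FractionalIdeal R⁰ (FractionRing R)) := by
      rw [FractionalIdeal.coeIdeal_mul]
      congr 1
      exact map_prod (FractionalIdeal.coeIdealHom R⁰ (FractionRing R)) _ _
    have hIdeal : I = J * ∏ N ∈ S, N := by
      apply FractionalIdeal.coeIdeal_injective (K := FractionRing R)
      simp only []
      rw [hprod, hJ, hfac]
    have hMnotS : M ∉ S := by
      intro hMS
      have hMem : M ∈ MSet R I := by
        rw [← hScoe]; exact Finset.mem_coe.mpr hMS
      obtain ⟨h, -, -, hnd⟩ := hMem
      apply hnd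
      show DivisorialLoc R M h.isPrime (MapAt R M h.isPrime I)
      have hmc : MapAt R M h.isPrime I = A :=
        IsLocalization.map_comap M.primeCompl (LocAt R M hM.isPrime) A
      rw [hmc]
      exact hA
    have hex : ∀ N ∈ S, ∃ t : R, t ∈ N ∧ t ∉ M := by
      intro N hN
      have hMem : N ∈ MSet R I := by
        rw [← hScoe]; exact Finset.mem_coe.mpr hN
      obtain ⟨hNmax, -, -, -⟩ := hMem
      by_contra hcon
      push_neg at hcon
      have hle : N ≤ M := fun t ht => hcon t ht
      exact hMnotS (hNmax.eq_of_le hM.ne_top hle ▸ hN)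
    choose f hf1 hf2 using hex
    have hsmem : (∏ N ∈ S.attach, f N.1 N.2) ∈ ∏ N ∈ S, N := by
      rw [← Finset.prod_attach S (fun N => N)]
      exact Ideal.prod_mem_prod (fun N _ => hf1 N.1 N.2)
    have hsnot : (∏ N ∈ S.attach, f N.1 N.2) ∉ M := by
      refine Finset.prod_induction _ (fun x => x ∉ M) ?_ ?_ (fun N _ => hf2 N.1 N.2)
      · intro a b ha hb hab
        rcases hM.isPrime.mem_or_mem hab with h | h
        · exact ha h
        · exact hb h
      · intro h1
        exact hM.ne_top ((Ideal.eq_top_iff_one M).mpr h1)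
    have hJleI : J ≤ I := by
      intro x hx
      have hxs : x * (∏ N ∈ S.attach, f N.1 N.2) ∈ I := by
        rw [hIdeal]
        exact Ideal.mul_mem_mul hx hsmem
      have hxsA : algebraMap R (LocAt R M hM.isPrime) (x * (∏ N ∈ S.attach, f N.1 N.2)) ∈ A := by
        rw [hIdef] at hxs
        exact Ideal.mem_comap.mp hxs
      have hu : IsUnit (algebraMap R (LocAt R M hM.isPrime) (∏ N ∈ S.attach, f N.1 N.2)) :=
        IsLocalization.map_units (LocAt R M hM.isPrime)
          (⟨_, hsnot⟩ : M.primeCompl)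
      obtain ⟨u, hu⟩ := hu
      rw [hIdef, Ideal.mem_comap]
      have heq : algebraMap R (LocAt R M hM.isPrime) x =
          algebraMap R (LocAt R M hM.isPrime) (x * (∏ N ∈ S.attach, f N.1 N.2)) * ↑u⁻¹ := by
        rw [map_mul, ← hu, mul_assoc, Units.mul_inv, mul_one]
      rw [heq]
      exact Ideal.mul_mem_right _ _ hxsA
    have hIJ : I = J := le_antisymm (hIdeal ▸ Ideal.mul_le_left) hJleI
    show divClos R I = (I : FractionalIdeal R⁰ (FractionRing R))
    rw [hIJ] at hJ ⊢
    exact hJ.symm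
end
end

section
/- Let I be a nonzero ideal of a Prüfer domain R contained in a maximal ideal M, and set J = I R_M ∩ R. Then for every maximal ideal N of R with N ≠ M, the ideal J R_N is a divisorial ideal of R_N. -/
open scoped nonZeroDivisors

noncomputable section

variable (R : Type*) [CommRing R] [IsDomain R]

/-- In a domain with totally ordered divisibility (a valuation-type domain), any ideal
saturated with respect to a nonzero nonunit `s` is divisorial. -/
theorem aux_div (V : Type*) [CommRing V] [IsDomain V]
    (htot : ∀ a b : V, a ∣ b ∨ b ∣ a)
    (s : V) (hs0 : s ≠ 0) (hsu : ¬ IsUnit s)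
    (B : Ideal V) (hsat : ∀ z : V, s * z ∈ B → z ∈ B) :
    Divisorial V B := by
  classical
  set K := FractionRing V
  by_cases hB : B = ⊥
  · have h0 : (B : FractionalIdeal V⁰ K) = 0 := FractionalIdeal.coeIdeal_eq_zero.mpr hB
    unfold Divisorial divClos
    rw [h0, FractionalIdeal.div_zero, FractionalIdeal.div_zero]
  have hBne : (B : FractionalIdeal V⁰ K) ≠ 0 := fun h =>
    hB (FractionalIdeal.coeIdeal_eq_zero.mp h)
  have hone_le : (1 : FractionalIdeal V⁰ K) ≤ 1 / (B : FractionalIdeal V⁰ K) :=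
    (FractionalIdeal.le_div_iff_mul_le hBne).mpr
      (by rw [one_mul]; exact FractionalIdeal.coeIdeal_le_one)
  have hinv_ne : (1 : FractionalIdeal V⁰ K) / (B : FractionalIdeal V⁰ K) ≠ 0 := fun h => by
    have h1m := hone_le (FractionalIdeal.one_mem_one _)
    rw [h] at h1m
    exact one_ne_zero ((FractionalIdeal.mem_zero_iff _).mp h1m)
  have hge : (B : FractionalIdeal V⁰ K) ≤ divClos V B :=
    (FractionalIdeal.le_div_iff_mul_le hinv_ne).mpr FractionalIdeal.mul_one_div_le_one
  refine le_antisymm ?_ hge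
  intro y hy
  by_contra hyB
  -- y is in the unit ideal
  have hy1 : y ∈ (1 : FractionalIdeal V⁰ K) := by
    have h1mem : (1 : K) ∈ (1 : FractionalIdeal V⁰ K) / (B : FractionalIdeal V⁰ K) :=
      hone_le (FractionalIdeal.one_mem_one _)
    have := (FractionalIdeal.mem_div_iff_of_ne_zero hinv_ne).mp hy _ h1mem
    rwa [mul_one] at this
  obtain ⟨y₀, rfl⟩ := (FractionalIdeal.mem_one_iff _).mp hy1
  have hy₀ : y₀ ∉ B := fun h => hyB (FractionalIdeal.mem_coeIdeal_of_mem _ h)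
  have hy₀0 : y₀ ≠ 0 := fun h => hy₀ (h ▸ B.zero_mem)
  set t := s * y₀ with ht_def
  have htB : t ∉ B := fun h => hy₀ (hsat _ h)
  have ht0 : t ≠ 0 := mul_ne_zero hs0 hy₀0
  have hdvd : ∀ b ∈ B, t ∣ b := by
    intro b hb
    rcases htot t b with h | ⟨c, hc⟩
    · exact h
    · exact absurd (hc ▸ Ideal.mul_mem_right c B hb) htB
  have hinj : Function.Injective (algebraMap V K) := IsFractionRing.injective V K
  have hit0 : algebraMap V K t ≠ 0 := fun h => ht0 (hinj (h.trans (map_zero _).symm))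
  set T := FractionalIdeal.spanSingleton V⁰ (algebraMap V K t) with hT
  have hT0 : T ≠ 0 := fun h => hit0 (FractionalIdeal.spanSingleton_eq_zero_iff.mp h)
  have hBle : (B : FractionalIdeal V⁰ K) ≤ T := by
    intro x hx
    obtain ⟨b, hb, rfl⟩ := (FractionalIdeal.mem_coeIdeal _).mp hx
    obtain ⟨c, rfl⟩ := hdvd b hb
    exact (FractionalIdeal.mem_spanSingleton _).mpr
      ⟨c, by rw [Algebra.smul_def, ← map_mul, mul_comm]⟩
  have hTinv_ne : (1 : FractionalIdeal V⁰ K) / T ≠ 0 := by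
    rw [FractionalIdeal.one_div_spanSingleton]
    exact fun h => inv_ne_zero hit0 (FractionalIdeal.spanSingleton_eq_zero_iff.mp h)
  -- 1/T ≤ 1/B
  have h1 : (1 : FractionalIdeal V⁰ K) / T ≤ 1 / (B : FractionalIdeal V⁰ K) :=
    (FractionalIdeal.le_div_iff_mul_le hBne).mpr
      (le_trans (mul_le_mul_right hBle _)
        (le_of_eq_of_le (mul_comm _ _) FractionalIdeal.mul_one_div_le_one))
  -- divClos B ≤ 1/(1/T) = T
  have h2 : divClos V B ≤ T := by
    have h3 : divClos V B ≤ 1 / (1 / T) :=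
      (FractionalIdeal.le_div_iff_mul_le hTinv_ne).mpr
        (le_trans (mul_le_mul_right h1 _)
          (le_of_eq_of_le (mul_comm _ _) FractionalIdeal.mul_one_div_le_one))
    rwa [FractionalIdeal.one_div_spanSingleton, FractionalIdeal.one_div_spanSingleton,
      inv_inv] at h3
  obtain ⟨c, hc⟩ := (FractionalIdeal.mem_spanSingleton _).mp (h2 hy)
  rw [Algebra.smul_def, ← map_mul] at hc
  have hct : c * t = y₀ := hinj hc
  rw [ht_def, ← mul_assoc] at hct
  have hcs : c * s = 1 := by
    have : (c * s) * y₀ = 1 * y₀ := by rw [one_mul]; exact hct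
    exact mul_right_cancel₀ hy₀0 this
  exact hsu (IsUnit.of_mul_eq_one (a := s) c (by rw [mul_comm]; exact hcs))

/-- In a Prüfer domain, divisibility in the localization at a maximal ideal is total. -/
theorem aux_tot (hR : IsPruferDomain R) (N : Ideal R) (hN : N.IsMaximal) :
    ∀ a b : LocAt R N hN.isPrime, a ∣ b ∨ b ∣ a := by
  classical
  haveI := hN.isPrime
  set V := LocAt R N hN.isPrime
  set iV := algebraMap R V with hiV
  set K := FractionRing R
  set iK := algebraMap R K with hiK
  have hinjK : Function.Injective iK := IsFractionRing.injective R K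
  have key : ∀ r₁ r₂ : R, iV r₁ ∣ iV r₂ ∨ iV r₂ ∣ iV r₁ := by
    intro r₁ r₂
    by_cases h1 : r₁ = 0
    · right; rw [h1, map_zero]; exact dvd_zero _
    by_cases h2 : r₂ = 0
    · left; rw [h2, map_zero]; exact dvd_zero _
    set I₀ := Ideal.span ({r₁, r₂} : Set R) with hI₀
    have hr₁I : r₁ ∈ I₀ := Ideal.subset_span (by simp)
    have hr₂I : r₂ ∈ I₀ := Ideal.subset_span (by simp)
    have hI0 : I₀ ≠ ⊥ := fun h => h1 ((Submodule.eq_bot_iff _).mp h r₁ hr₁I)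
    have hFG : I₀.FG := ⟨{r₁, r₂}, by simp [hI₀]⟩
    have hu := hR I₀ hI0 hFG
    set F := (I₀ : FractionalIdeal R⁰ K) with hF
    have hF0 : F ≠ 0 := fun h => hI0 (FractionalIdeal.coeIdeal_eq_zero.mp h)
    have hmul : F * (1 / F) = 1 := by
      obtain ⟨u, hu'⟩ := hu
      have hinvle : (↑u⁻¹ : FractionalIdeal R⁰ K) ≤ 1 / F :=
        (FractionalIdeal.le_div_iff_mul_le hF0).mpr (by rw [← hu', Units.inv_mul])
      refine le_antisymm FractionalIdeal.mul_one_div_le_one ?_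
      calc (1 : FractionalIdeal R⁰ K) = F * ↑u⁻¹ := by rw [← hu', Units.mul_inv]
        _ ≤ F * (1 / F) := mul_le_mul_right hinvle F
    have hone : (1 : K) ∈ ((F * (1 / F) : FractionalIdeal R⁰ K) : Submodule R K) := by
      rw [hmul]; exact FractionalIdeal.one_mem_one _
    rw [FractionalIdeal.coe_mul] at hone
    have hrep : ∃ u v : K, u ∈ 1 / F ∧ v ∈ 1 / F ∧ (1 : K) = iK r₁ * u + iK r₂ * v := by
      refine Submodule.mul_induction_on hone ?_ ?_
      · intro m hm n hn
        rw [FractionalIdeal.mem_coe] at hm hn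
        obtain ⟨m₀, hm₀, rfl⟩ := (FractionalIdeal.mem_coeIdeal _).mp hm
        obtain ⟨a, b, hab⟩ := Ideal.mem_span_pair.mp (hI₀ ▸ hm₀)
        refine ⟨iK a * n, iK b * n, ?_, ?_, ?_⟩
        · have := Submodule.smul_mem ((1 / F : FractionalIdeal R⁰ K) : Submodule R K) a
            (FractionalIdeal.mem_coe.mpr hn)
          rw [Algebra.smul_def] at this
          exact FractionalIdeal.mem_coe.mp this
        · have := Submodule.smul_mem ((1 / F : FractionalIdeal R⁰ K) : Submodule R K) b
            (FractionalIdeal.mem_coe.mpr hn)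
          rw [Algebra.smul_def] at this
          exact FractionalIdeal.mem_coe.mp this
        · rw [← hab, map_add, map_mul, map_mul]; ring
      · rintro x y ⟨u₁, v₁, hu₁, hv₁, hx⟩ ⟨u₂, v₂, hu₂, hv₂, hy⟩
        refine ⟨u₁ + u₂, v₁ + v₂, ?_, ?_, by rw [hx, hy]; ring⟩
        · exact FractionalIdeal.mem_coe.mp (add_mem (FractionalIdeal.mem_coe.mpr hu₁)
            (FractionalIdeal.mem_coe.mpr hu₂))
        · exact FractionalIdeal.mem_coe.mp (add_mem (FractionalIdeal.mem_coe.mpr hv₁)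
            (FractionalIdeal.mem_coe.mpr hv₂))
    obtain ⟨u, v, hu1, hv1, heq⟩ := hrep
    have hmemF : ∀ r ∈ I₀, iK r ∈ F := fun r hr => FractionalIdeal.mem_coeIdeal_of_mem _ hr
    obtain ⟨a, ha⟩ := (FractionalIdeal.mem_one_iff _).mp
      ((FractionalIdeal.mem_div_iff_of_ne_zero hF0).mp hu1 _ (hmemF r₁ hr₁I))
    obtain ⟨b, hb⟩ := (FractionalIdeal.mem_one_iff _).mp
      ((FractionalIdeal.mem_div_iff_of_ne_zero hF0).mp hu1 _ (hmemF r₂ hr₂I))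
    obtain ⟨c, hc⟩ := (FractionalIdeal.mem_one_iff _).mp
      ((FractionalIdeal.mem_div_iff_of_ne_zero hF0).mp hv1 _ (hmemF r₁ hr₁I))
    obtain ⟨d, hd⟩ := (FractionalIdeal.mem_one_iff _).mp
      ((FractionalIdeal.mem_div_iff_of_ne_zero hF0).mp hv1 _ (hmemF r₂ hr₂I))
    have hsum : a + d = 1 := by
      apply hinjK
      rw [map_add, map_one, ha, hd, heq]; ring
    have hnotboth : a ∉ N ∨ d ∉ N := by
      by_contra h
      push_neg at h
      exact hN.ne_top (Ideal.eq_top_of_isUnit_mem N (hsum ▸ Ideal.add_mem N h.1 h.2) isUnit_one)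
    rcases hnotboth with haN | hdN
    · -- r₂ * a = r₁ * b, a unit in V, so r₁ ∣ r₂
      left
      have hid : r₂ * a = r₁ * b := by
        apply hinjK
        rw [map_mul, map_mul, ha, hb]; ring
      have hua : IsUnit (iV a) := IsLocalization.map_units V (⟨a, haN⟩ : N.primeCompl)
      obtain ⟨w, hw⟩ := hua.exists_right_inv
      refine ⟨iV b * w, ?_⟩
      have : iV r₂ * (iV a * w) = iV r₁ * (iV b * w) := by
        rw [← mul_assoc, ← map_mul, ← mul_assoc, ← map_mul, hid]
      rwa [hw, mul_one] at this
    · -- r₁ * d = r₂ * c, d unit in V, so r₂ ∣ r₁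
      right
      have hid : r₁ * d = r₂ * c := by
        apply hinjK
        rw [map_mul, map_mul, hd, hc]; ring
      have hud : IsUnit (iV d) := IsLocalization.map_units V (⟨d, hdN⟩ : N.primeCompl)
      obtain ⟨w, hw⟩ := hud.exists_right_inv
      refine ⟨iV c * w, ?_⟩
      have : iV r₁ * (iV d * w) = iV r₂ * (iV c * w) := by
        rw [← mul_assoc, ← map_mul, ← mul_assoc, ← map_mul, hid]
      rwa [hw, mul_one] at this
  intro x y
  obtain ⟨⟨rx, sx⟩, hx⟩ := IsLocalization.surj N.primeCompl x
  obtain ⟨⟨ry, sy⟩, hy⟩ := IsLocalization.surj N.primeCompl y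
  have hux : IsUnit (iV (sx : R)) := IsLocalization.map_units V sx
  have huy : IsUnit (iV (sy : R)) := IsLocalization.map_units V sy
  obtain ⟨wy, hwy⟩ := huy.exists_right_inv
  obtain ⟨wx, hwx⟩ := hux.exists_right_inv
  have hxdvd : x ∣ iV rx := ⟨iV sx, hx.symm⟩
  have hydvd : y ∣ iV ry := ⟨iV sy, hy.symm⟩
  have hrdx : iV rx ∣ x := ⟨wx, by rw [← hx, mul_assoc, hwx, mul_one]⟩
  have hrdy : iV ry ∣ y := ⟨wy, by rw [← hy, mul_assoc, hwy, mul_one]⟩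
  rcases key rx ry with h | h
  · exact Or.inl (dvd_trans (dvd_trans hxdvd h) hrdy)
  · exact Or.inr (dvd_trans (dvd_trans hydvd h) hrdx)

/-- For a nonzero ideal `I ≤ M` of a Prüfer domain and `J = I R_M ∩ R`, the ideal `J R_N`
is divisorial in `R_N` for every maximal ideal `N ≠ M`. -/
theorem stmt12 (hR : IsPruferDomain R) (I : Ideal R) (hI : I ≠ ⊥)
    (M : Ideal R) (hM : M.IsMaximal) (hIM : I ≤ M)
    (N : Ideal R) (hN : N.IsMaximal) (hNM : N ≠ M) :
    DivisorialAt R N hN.isPrime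
      ((MapAt R M hM.isPrime I).comap (algebraMap R (LocAt R M hM.isPrime))) := by
  classical
  haveI := hN.isPrime
  haveI := hM.isPrime
  have hNM' : ¬ N ≤ M := fun h => hNM (hN.eq_of_le hM.ne_top h)
  obtain ⟨s, hsN, hsM⟩ := SetLike.not_le_iff_exists.mp hNM'
  set V := LocAt R N hN.isPrime with hV
  haveI : IsDomain V :=
    IsLocalization.isDomain_localization (Ideal.primeCompl_le_nonZeroDivisors N)
  set iV := algebraMap R V with hiV
  set J := (MapAt R M hM.isPrime I).comap (algebraMap R (LocAt R M hM.isPrime)) with hJ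
  -- J is saturated with respect to s in R
  have hsatR : ∀ r : R, s * r ∈ J → r ∈ J := by
    intro r hr
    have hu : IsUnit (algebraMap R (LocAt R M hM.isPrime) s) :=
      IsLocalization.map_units _ (⟨s, hsM⟩ : M.primeCompl)
    obtain ⟨c, hc⟩ := hu.exists_right_inv
    rw [hJ, Ideal.mem_comap] at hr ⊢
    rw [map_mul] at hr
    have heq : algebraMap R (LocAt R M hM.isPrime) r =
        (algebraMap R (LocAt R M hM.isPrime) s * algebraMap R (LocAt R M hM.isPrime) r) * c := by
      rw [mul_comm (algebraMap R (LocAt R M hM.isPrime) s), mul_assoc, hc, mul_one]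
    rw [heq]
    exact Ideal.mul_mem_right c _ hr
  -- J R_N is saturated with respect to (the image of) s in R_N
  have hsatV : ∀ z : V, iV s * z ∈ MapAt R N hN.isPrime J → z ∈ MapAt R N hN.isPrime J := by
    intro z hz
    have hinj : Function.Injective iV :=
      IsLocalization.injective V (Ideal.primeCompl_le_nonZeroDivisors N)
    rw [MapAt, IsLocalization.mem_map_algebraMap_iff N.primeCompl] at hz ⊢
    obtain ⟨⟨⟨j, hj⟩, w⟩, hw⟩ := hz
    obtain ⟨⟨r, w'⟩, hr⟩ := IsLocalization.surj N.primeCompl z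
    simp only at hw hr
    have hkey : s * (r * (w : R)) = j * (w' : R) := by
      apply hinj
      rw [map_mul, map_mul, map_mul, ← hr, ← hw]; ring
    have hmem : s * (r * (w : R)) ∈ J := hkey ▸ J.mul_mem_right (w' : R) hj
    have hrw : r * (w : R) ∈ J := hsatR _ hmem
    refine ⟨⟨⟨r * (w : R), hrw⟩, w' * w⟩, ?_⟩
    simp only [Submonoid.coe_mul]
    rw [map_mul, ← mul_assoc, hr, ← map_mul]
  have hs0 : iV s ≠ 0 := by
    intro h
    have : s = 0 := IsLocalization.injective V (Ideal.primeCompl_le_nonZeroDivisors N)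
      (h.trans (map_zero iV).symm)
    exact hsM (this ▸ M.zero_mem)
  have hsu : ¬ IsUnit (iV s) := by
    intro h
    exact (IsLocalization.AtPrime.isUnit_to_map_iff V N s).mp h hsN
  exact aux_div V (aux_tot R hR N hN) (iV s) hs0 hsu (MapAt R N hN.isPrime J) hsatV
end
end

section
/- Let R be an almost Dedekind domain, P an invertible maximal ideal of R, and I a nonzero ideal of R. Then I^v R_P = I R_P. -/
open scoped nonZeroDivisors

noncomputable section

variable (R : Type*) [CommRing R] [IsDomain R]

lemma unit_divClos {J : FractionalIdeal R⁰ (FractionRing R)} (h : IsUnit J) :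
    1 / (1 / J) = J := by
  obtain ⟨u, rfl⟩ := h
  have h1 : (u.inv : FractionalIdeal R⁰ (FractionRing R)) = 1 / (u : FractionalIdeal R⁰ (FractionRing R)) :=
    FractionalIdeal.eq_one_div_of_mul_eq_one_right _ _ u.val_inv
  have h2 : (u : FractionalIdeal R⁰ (FractionRing R)) = 1 / u.inv :=
    FractionalIdeal.eq_one_div_of_mul_eq_one_right _ _ u.inv_val
  rw [← h1, ← h2]

lemma one_div_antitone {J K : FractionalIdeal R⁰ (FractionRing R)} (hJ : J ≠ 0) (h : J ≤ K) :
    1 / K ≤ 1 / J := by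
  rw [FractionalIdeal.le_div_iff_mul_le hJ]
  rw [FractionalIdeal.mul_le]
  intro i hi j hj
  rw [mul_comm]
  exact FractionalIdeal.mul_le.mp FractionalIdeal.mul_one_div_le_one j (h hj) i hi

lemma le_self_divClos {I : Ideal R} (hI : I ≠ ⊥) :
    (I : FractionalIdeal R⁰ (FractionRing R)) ≤ divClos R I := by
  have hI0 : (I : FractionalIdeal R⁰ (FractionRing R)) ≠ 0 := by
    rwa [Ne, FractionalIdeal.coeIdeal_eq_zero]
  have hd : (1 : FractionalIdeal R⁰ (FractionRing R)) ≤ 1 / (I : FractionalIdeal R⁰ (FractionRing R)) := by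
    rw [FractionalIdeal.le_div_iff_mul_le hI0, one_mul]
    exact FractionalIdeal.coeIdeal_le_one
  have hne : (1 / (I : FractionalIdeal R⁰ (FractionRing R))) ≠ 0 := by
    intro h
    rw [h] at hd
    exact one_ne_zero (le_antisymm hd (FractionalIdeal.zero_le _))
  rw [divClos, FractionalIdeal.le_div_iff_mul_le hne]
  exact FractionalIdeal.mul_one_div_le_one

/-- In an almost Dedekind domain, if `P` is an invertible maximal ideal and `I` a nonzero
ideal, then `I^v R_P = I R_P`. -/
theorem stmt16 (hAD : AlmostDedekind R) (P : Ideal R) (hP : P.IsMaximal)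
    (hinv : IsUnit (P : FractionalIdeal R⁰ (FractionRing R)))
    (I : Ideal R) (hI : I ≠ ⊥) :
    MapAt R P hP.isPrime (vIdeal R I) = MapAt R P hP.isPrime I := by
  classical
  haveI hdom : IsDomain (LocAt R P hP.isPrime) :=
    IsLocalization.isDomain_localization (@Ideal.primeCompl_le_nonZeroDivisors R _ _ P hP.isPrime)
  haveI hdvr : IsDiscreteValuationRing (LocAt R P hP.isPrime) := hAD P hP
  haveI : P.IsMaximal := hP
  have hinj : Function.Injective (algebraMap R (LocAt R P hP.isPrime)) :=
    IsLocalization.injective _ (@Ideal.primeCompl_le_nonZeroDivisors R _ _ P hP.isPrime)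
  have hmapne : MapAt R P hP.isPrime I ≠ ⊥ := by
    intro hbot
    obtain ⟨x, hxI, hx0⟩ := Submodule.exists_mem_ne_zero_of_ne_bot hI
    have hmem : algebraMap R (LocAt R P hP.isPrime) x ∈ MapAt R P hP.isPrime I :=
      Ideal.mem_map_of_mem _ hxI
    rw [hbot, Ideal.mem_bot] at hmem
    exact hx0 (hinj (hmem.trans (map_zero _).symm))
  obtain ⟨ϖ, hirr⟩ := IsDiscreteValuationRing.exists_irreducible (LocAt R P hP.isPrime)
  obtain ⟨n, hn⟩ := IsDiscreteValuationRing.ideal_eq_span_pow_irreducible hmapne hirr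
  have hPmax : MapAt R P hP.isPrime P = Ideal.span {ϖ} := by
    rw [MapAt, Localization.AtPrime.map_eq_maximalIdeal]
    exact hirr.maximalIdeal_eq
  have key : MapAt R P hP.isPrime I = (MapAt R P hP.isPrime P) ^ n := by
    rw [hn, hPmax, Ideal.span_singleton_pow]
  -- I ≤ P ^ n
  have hIPn : I ≤ P ^ n := by
    intro x hx
    have hmem : algebraMap R (LocAt R P hP.isPrime) x ∈ MapAt R P hP.isPrime (P ^ n) := by
      have : algebraMap R (LocAt R P hP.isPrime) x ∈ MapAt R P hP.isPrime I :=
        Ideal.mem_map_of_mem _ hx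
      rw [key] at this
      rwa [MapAt, Ideal.map_pow]
    obtain ⟨⟨a, s⟩, hs⟩ :=
      (IsLocalization.mem_map_algebraMap_iff (Ideal.primeCompl P)
        (LocAt R P hP.isPrime)).mp hmem
    have hxs : x * (s : R) = (a : R) := by
      apply hinj
      rw [map_mul]
      exact hs
    by_cases hn0 : n = 0
    · simp [hn0]
    have hprim : (P ^ n).IsPrimary := Ideal.isPrimary_of_isMaximal_radical (by
      rw [Ideal.radical_pow P hn0, hP.isPrime.radical]; exact hP)
    have hxsPn : x * (s : R) ∈ P ^ n := by rw [hxs]; exact a.2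
    rcases (Ideal.isPrimary_iff.mp hprim).2 hxsPn with h | h
    · exact h
    · rw [Ideal.radical_pow P hn0, hP.isPrime.radical] at h
      exact absurd h s.2
  -- units and divisoriality of P ^ n
  have hPn_unit : IsUnit ((P ^ n : Ideal R) : FractionalIdeal R⁰ (FractionRing R)) := by
    rw [FractionalIdeal.coeIdeal_pow]
    exact hinv.pow n
  have hdc : divClos R (P ^ n) = ((P ^ n : Ideal R) : FractionalIdeal R⁰ (FractionRing R)) :=
    unit_divClos R hPn_unit
  have hne : (1 / ((P ^ n : Ideal R) : FractionalIdeal R⁰ (FractionRing R))) ≠ 0 := by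
    intro h
    apply hPn_unit.ne_zero
    rw [← hdc, divClos, h, FractionalIdeal.div_zero]
  have hIne : (I : FractionalIdeal R⁰ (FractionRing R)) ≠ 0 := by
    rwa [Ne, FractionalIdeal.coeIdeal_eq_zero]
  have hdivle : divClos R I ≤ ((P ^ n : Ideal R) : FractionalIdeal R⁰ (FractionRing R)) := by
    rw [← hdc]
    have hle : (I : FractionalIdeal R⁰ (FractionRing R)) ≤
        ((P ^ n : Ideal R) : FractionalIdeal R⁰ (FractionRing R)) :=
      (FractionalIdeal.coeIdeal_le_coeIdeal _).mpr hIPn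
    exact one_div_antitone R hne (one_div_antitone R hIne hle)
  -- vIdeal I ≤ P ^ n
  have hv : vIdeal R I ≤ P ^ n := by
    intro x hx
    rw [vIdeal, Submodule.mem_comap] at hx
    have hx' : algebraMap R (FractionRing R) x ∈
        ((P ^ n : Ideal R) : FractionalIdeal R⁰ (FractionRing R)) := hdivle hx
    obtain ⟨y, hy, hyx⟩ := (FractionalIdeal.mem_coeIdeal _).mp hx'
    rwa [← IsFractionRing.injective R (FractionRing R) hyx]
  -- I ≤ vIdeal I
  have hIv : I ≤ vIdeal R I := by
    intro x hx
    rw [vIdeal, Submodule.mem_comap]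
    exact le_self_divClos R hI (FractionalIdeal.mem_coeIdeal_of_mem _ hx)
  apply le_antisymm
  · calc MapAt R P hP.isPrime (vIdeal R I) ≤ MapAt R P hP.isPrime (P ^ n) := Ideal.map_mono hv
      _ = (MapAt R P hP.isPrime P) ^ n := by rw [MapAt, Ideal.map_pow]; rfl
      _ = MapAt R P hP.isPrime I := key.symm
  · exact Ideal.map_mono hIv
end
end

section
/- Let R be an almost Dedekind domain in which every nonzero ideal is contained in only finitely many noninvertible maximal ideals. Then R has the weak factorization property: every nonzero ideal I of R can be written I = I^v · M_1^{t_1} ⋯ M_n^{t_n}, where M_1, …, M_n are the noninvertible maximal ideals containing I and t_i ≥ 0. -/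
open scoped nonZeroDivisors

noncomputable section

variable (R : Type*) [CommRing R] [IsDomain R]

namespace WFaux

open FractionalIdeal

variable {R : Type*} [CommRing R] [IsDomain R]

lemma coe_ne {J : Ideal R} (hJ : J ≠ ⊥) : (J : FractionalIdeal R⁰ (FractionRing R)) ≠ 0 :=
  coeIdeal_ne_zero.mpr hJ

lemma one_le_one_div {J : Ideal R} (hJ : J ≠ ⊥) :
    (1 : FractionalIdeal R⁰ (FractionRing R)) ≤ 1 / (J : FractionalIdeal R⁰ (FractionRing R)) := by
  rw [le_div_iff_mul_le (coe_ne hJ), one_mul]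
  exact coeIdeal_le_one

lemma one_div_ne {J : Ideal R} (hJ : J ≠ ⊥) :
    (1 : FractionalIdeal R⁰ (FractionRing R)) / (J : FractionalIdeal R⁰ (FractionRing R)) ≠ 0 :=
  fun h => one_ne_zero (le_antisymm (h ▸ one_le_one_div hJ) (zero_le _) :
    (1 : FractionalIdeal R⁰ (FractionRing R)) = 0)

lemma one_div_mul_eq {A B C : FractionalIdeal R⁰ (FractionRing R)} (hA : A ≠ 0)
    (hBC : B * C = 1) : 1 / (A * B) = 1 / A * C := by
  have hAB : A * B ≠ 0 := fun h => hA (by rw [← mul_one A, ← hBC, ← mul_assoc, h, zero_mul])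
  apply le_antisymm
  · have h1 : 1 / (A * B) * (A * B) ≤ 1 := (le_div_iff_mul_le hAB).mp le_rfl
    calc 1 / (A * B) = 1 / (A * B) * (B * C) := by rw [hBC, mul_one]
    _ = 1 / (A * B) * B * C := by ring
    _ ≤ 1 / A * C := by
        refine mul_left_mono (a := C) ?_
        rw [le_div_iff_mul_le hA, mul_assoc, mul_comm B A]
        exact h1
  · rw [le_div_iff_mul_le hAB]
    calc 1 / A * C * (A * B) = 1 / A * A * (C * B) := by ring
    _ ≤ 1 * (C * B) := mul_left_mono ((le_div_iff_mul_le hA).mp le_rfl)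
    _ = 1 := by rw [one_mul, mul_comm, hBC]

lemma le_divClos {J : Ideal R} (hJ : J ≠ ⊥) :
    (J : FractionalIdeal R⁰ (FractionRing R)) ≤ divClos R J :=
  (le_div_iff_mul_le (one_div_ne hJ)).mpr
    (by rw [mul_comm]; exact (le_div_iff_mul_le (coe_ne hJ)).mp le_rfl)

lemma divClos_le_one {J : Ideal R} (hJ : J ≠ ⊥) :
    divClos R J ≤ 1 := by
  rw [divClos]
  calc 1 / (1 / (J : FractionalIdeal R⁰ (FractionRing R)))
      = 1 / (1 / (J : FractionalIdeal R⁰ (FractionRing R))) * 1 := (mul_one _).symm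
  _ ≤ 1 / (1 / (J : FractionalIdeal R⁰ (FractionRing R))) *
        (1 / (J : FractionalIdeal R⁰ (FractionRing R))) :=
      mul_right_mono (one_le_one_div hJ)
  _ ≤ 1 := (le_div_iff_mul_le (one_div_ne hJ)).mp le_rfl

lemma exists_divClos {J : Ideal R} (hJ : J ≠ ⊥) :
    ∃ V : Ideal R, (V : FractionalIdeal R⁰ (FractionRing R)) = divClos R J ∧ J ≤ V ∧ V ≠ ⊥ := by
  obtain ⟨V, hV⟩ := le_one_iff_exists_coeIdeal.mp (divClos_le_one hJ)
  refine ⟨V, hV, ?_, ?_⟩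
  · exact (coeIdeal_le_coeIdeal (FractionRing R)).mp (by rw [hV]; exact le_divClos hJ)
  · rintro rfl
    have h0 : (J : FractionalIdeal R⁰ (FractionRing R)) ≤ 0 := by
      rw [← FractionalIdeal.coeIdeal_bot, hV]
      exact le_divClos hJ
    exact coe_ne hJ (le_antisymm h0 (zero_le _))

lemma divClos_coe_mul_unit {J : Ideal R} (hJ : J ≠ ⊥)
    {B C : FractionalIdeal R⁰ (FractionRing R)} (hBC : B * C = 1) :
    1 / (1 / ((J : FractionalIdeal R⁰ (FractionRing R)) * B)) = divClos R J * B := by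
  rw [one_div_mul_eq (coe_ne hJ) hBC, divClos,
    one_div_mul_eq (one_div_ne hJ) (by rw [mul_comm]; exact hBC)]

end WFaux


namespace WFaux

variable {R : Type*} [CommRing R] [IsDomain R]

lemma mapAt_eq_top {P : Ideal R} (hP : P.IsMaximal) {I : Ideal R} (hI : ¬ I ≤ P) :
    MapAt R P hP.isPrime I = ⊤ := by
  haveI := hP.isPrime
  obtain ⟨x, hxI, hxP⟩ := SetLike.not_le_iff_exists.mp hI
  exact Ideal.eq_top_of_isUnit_mem _ (Ideal.mem_map_of_mem _ hxI)
    (IsLocalization.map_units (LocAt R P hP.isPrime) (⟨x, hxP⟩ : P.primeCompl))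

lemma mapAt_maximal_ne {P M : Ideal R} (hP : P.IsMaximal) (hM : M.IsMaximal) (hne : M ≠ P) :
    MapAt R P hP.isPrime M = ⊤ :=
  mapAt_eq_top hP (fun h => hne (hM.eq_of_le hP.ne_top h))

lemma mapAt_ne_bot {P : Ideal R} (hp : P.IsPrime) {I : Ideal R} (hI : I ≠ ⊥) :
    MapAt R P hp I ≠ ⊥ := by
  haveI := hp
  rw [Ne, MapAt, Ideal.map_eq_bot_iff_of_injective
    (IsLocalization.injective (LocAt R P hp) P.primeCompl_le_nonZeroDivisors)]
  exact hI

open Classical in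
noncomputable def expAt (P I : Ideal R) (hp : P.IsPrime) : ℕ :=
  if h : ∃ n, MapAt R P hp I = (MapAt R P hp P) ^ n then h.choose else 0

lemma expAt_spec (hAD : AlmostDedekind R) {P : Ideal R} (hP : P.IsMaximal) {I : Ideal R}
    (hI : I ≠ ⊥) :
    MapAt R P hP.isPrime I = (MapAt R P hP.isPrime P) ^ (expAt P I hP.isPrime) := by
  haveI := hP.isPrime
  haveI : IsDomain (LocAt R P hP.isPrime) :=
    IsLocalization.isDomain_localization P.primeCompl_le_nonZeroDivisors
  haveI : IsDiscreteValuationRing (LocAt R P hP.isPrime) := hAD P hP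
  have hmap : MapAt R P hP.isPrime P = IsLocalRing.maximalIdeal (LocAt R P hP.isPrime) :=
    Localization.AtPrime.map_eq_maximalIdeal
  obtain ⟨ϖ, hϖ⟩ := IsDiscreteValuationRing.exists_irreducible (LocAt R P hP.isPrime)
  obtain ⟨n, hn⟩ := IsDiscreteValuationRing.ideal_eq_span_pow_irreducible (mapAt_ne_bot _ hI) hϖ
  have hex : ∃ n, MapAt R P hP.isPrime I = (MapAt R P hP.isPrime P) ^ n :=
    ⟨n, by rw [hn, hmap, hϖ.maximalIdeal_eq, Ideal.span_singleton_pow]⟩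
  rw [expAt, dif_pos hex]
  exact hex.choose_spec

lemma expAt_pow_le (hAD : AlmostDedekind R) {P : Ideal R} (hP : P.IsMaximal) {a b : ℕ}
    (h : (MapAt R P hP.isPrime P) ^ a ≤ (MapAt R P hP.isPrime P) ^ b) : b ≤ a := by
  haveI := hP.isPrime
  haveI : IsDomain (LocAt R P hP.isPrime) :=
    IsLocalization.isDomain_localization P.primeCompl_le_nonZeroDivisors
  haveI : IsDiscreteValuationRing (LocAt R P hP.isPrime) := hAD P hP
  have hmap : MapAt R P hP.isPrime P = IsLocalRing.maximalIdeal (LocAt R P hP.isPrime) :=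
    Localization.AtPrime.map_eq_maximalIdeal
  obtain ⟨ϖ, hϖ⟩ := IsDiscreteValuationRing.exists_irreducible (LocAt R P hP.isPrime)
  rw [hmap, hϖ.maximalIdeal_eq, Ideal.span_singleton_pow, Ideal.span_singleton_pow,
    Ideal.span_singleton_le_span_singleton] at h
  exact (pow_dvd_pow_iff hϖ.ne_zero hϖ.not_isUnit).mp h

lemma expAt_pow_inj (hAD : AlmostDedekind R) {P : Ideal R} (hP : P.IsMaximal) {a b : ℕ}
    (h : (MapAt R P hP.isPrime P) ^ a = (MapAt R P hP.isPrime P) ^ b) : a = b :=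
  le_antisymm (expAt_pow_le hAD hP h.ge) (expAt_pow_le hAD hP h.le)

end WFaux


namespace WFaux

open FractionalIdeal

variable {R : Type*} [CommRing R] [IsDomain R]

lemma mapAt_prod {P : Ideal R} (hp : P.IsPrime) {ι : Type*} (S : Finset ι) (g : ι → Ideal R) :
    MapAt R P hp (∏ M ∈ S, g M) = ∏ M ∈ S, MapAt R P hp (g M) :=
  map_prod (Ideal.mapHom (algebraMap R (LocAt R P hp))) g S

lemma mapAt_mul {P : Ideal R} (hp : P.IsPrime) (I J : Ideal R) :
    MapAt R P hp (I * J) = MapAt R P hp I * MapAt R P hp J :=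
  Ideal.map_mul _ I J

lemma mapAt_pow {P : Ideal R} (hp : P.IsPrime) (I : Ideal R) (n : ℕ) :
    MapAt R P hp (I ^ n) = MapAt R P hp I ^ n :=
  Ideal.map_pow _ _ n

lemma mapAt_mono {P : Ideal R} (hp : P.IsPrime) {I J : Ideal R} (h : I ≤ J) :
    MapAt R P hp I ≤ MapAt R P hp J := Ideal.map_mono h

lemma le_of_mapAt_le {I J : Ideal R}
    (h : ∀ (P : Ideal R) (hP : P.IsMaximal), MapAt R P hP.isPrime I ≤ MapAt R P hP.isPrime J) :
    I ≤ J :=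
  Ideal.le_of_localization_maximal fun P hP => h P hP

lemma eq_of_mapAt_eq {I J : Ideal R}
    (h : ∀ (P : Ideal R) (hP : P.IsMaximal), MapAt R P hP.isPrime I = MapAt R P hP.isPrime J) :
    I = J :=
  Ideal.eq_of_localization_maximal fun P hP => h P hP

lemma coe_prod_pow (S : Finset (Ideal R)) (t : Ideal R → ℕ) :
    ((∏ M ∈ S, M ^ t M : Ideal R) : FractionalIdeal R⁰ (FractionRing R))
      = ∏ M ∈ S, (M : FractionalIdeal R⁰ (FractionRing R)) ^ t M := by
  classical
  induction S using Finset.induction_on with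
  | empty => simp
  | @insert a s ha ih =>
      rw [Finset.prod_insert ha, Finset.prod_insert ha, coeIdeal_mul, coeIdeal_pow, ih]

lemma mapAt_divClos_eq (hAD : AlmostDedekind R) {I V : Ideal R} (hI : I ≠ ⊥)
    (hV : (V : FractionalIdeal R⁰ (FractionRing R)) = divClos R I)
    {P : Ideal R} (hP : P.IsMaximal)
    (hU : IsUnit (P : FractionalIdeal R⁰ (FractionRing R))) :
    MapAt R P hP.isPrime V = MapAt R P hP.isPrime I := by
  classical
  set t := expAt P I hP.isPrime with ht
  obtain ⟨u, hu⟩ := hU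
  have hBC : (P : FractionalIdeal R⁰ (FractionRing R)) ^ t *
      ((u⁻¹ : (FractionalIdeal R⁰ (FractionRing R))ˣ) : FractionalIdeal R⁰ (FractionRing R)) ^ t
        = 1 := by
    rw [← hu, ← mul_pow, Units.mul_inv, one_pow]
  have hle : I ≤ P ^ t := by
    apply le_of_mapAt_le
    intro Q hQ
    by_cases hQP : Q = P
    · subst hQP
      rw [mapAt_pow]
      exact le_of_eq (expAt_spec hAD hQ hI)
    · rw [mapAt_pow, mapAt_maximal_ne hQ hP (fun h => hQP h.symm), Ideal.top_pow]
      exact le_top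
  have hIle : (I : FractionalIdeal R⁰ (FractionRing R))
      ≤ (P : FractionalIdeal R⁰ (FractionRing R)) ^ t := by
    rw [← coeIdeal_pow]
    exact (coeIdeal_le_coeIdeal _).mpr hle
  have hJle : (I : FractionalIdeal R⁰ (FractionRing R)) *
      ((u⁻¹ : (FractionalIdeal R⁰ (FractionRing R))ˣ) : FractionalIdeal R⁰ (FractionRing R)) ^ t
        ≤ 1 := by
    calc (I : FractionalIdeal R⁰ (FractionRing R)) * (↑u⁻¹ : _) ^ t
        ≤ (P : FractionalIdeal R⁰ (FractionRing R)) ^ t * (↑u⁻¹ : _) ^ t :=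
          mul_left_mono hIle
    _ = 1 := hBC
  obtain ⟨J, hJ⟩ := le_one_iff_exists_coeIdeal.mp hJle
  have hIJ : (I : FractionalIdeal R⁰ (FractionRing R))
      = (J : FractionalIdeal R⁰ (FractionRing R))
        * (P : FractionalIdeal R⁰ (FractionRing R)) ^ t := by
    rw [hJ, mul_assoc, mul_comm
      (((u⁻¹ : (FractionalIdeal R⁰ (FractionRing R))ˣ) :
        FractionalIdeal R⁰ (FractionRing R)) ^ t), hBC, mul_one]
  have hIJ' : I = J * P ^ t := by
    apply coeIdeal_inj
      (K := FractionRing R) |>.mp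
    rw [coeIdeal_mul, coeIdeal_pow]
    exact hIJ
  have hJ0 : J ≠ ⊥ := by
    rintro rfl
    exact hI (by simpa using hIJ')
  have hmapJ : MapAt R P hP.isPrime J = ⊤ := by
    have h1 : MapAt R P hP.isPrime I
        = MapAt R P hP.isPrime J * (MapAt R P hP.isPrime P) ^ t := by
      rw [hIJ', mapAt_mul, mapAt_pow]
    have h2 := expAt_spec hAD hP hI
    have h3 := expAt_spec hAD hP hJ0
    rw [h3, h2, ← pow_add] at h1
    have h4 := expAt_pow_inj hAD hP h1
    have hs : expAt P J hP.isPrime = 0 := by omega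
    rw [h3, hs, pow_zero, Ideal.one_eq_top]
  have hdc : divClos R I = divClos R J * (P : FractionalIdeal R⁰ (FractionRing R)) ^ t := by
    rw [divClos, hIJ, divClos_coe_mul_unit hJ0 hBC]
  obtain ⟨V', hV', hJV', hV'0⟩ := exists_divClos hJ0
  have hVeq : V = V' * P ^ t := by
    apply coeIdeal_inj (K := FractionRing R) |>.mp
    rw [coeIdeal_mul, coeIdeal_pow, hV, hV', hdc]
  have hmapV' : MapAt R P hP.isPrime V' = ⊤ :=
    eq_top_iff.mpr (hmapJ ▸ mapAt_mono _ hJV')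
  rw [hVeq, mapAt_mul, mapAt_pow, hmapV', Ideal.top_mul]
  exact (expAt_spec hAD hP hI).symm

end WFaux

/-- An almost Dedekind domain in which every nonzero ideal lies in only finitely many
noninvertible maximal ideals has the weak factorization property: `I = I^v M₁^{t₁} ⋯ Mₙ^{tₙ}`
where the `Mᵢ` are the noninvertible maximal ideals containing `I`. -/
theorem stmt17 (hAD : AlmostDedekind R)
    (hfin : ∀ I : Ideal R, I ≠ ⊥ →
      {M : Ideal R | M.IsMaximal ∧
        ¬ IsUnit (M : FractionalIdeal R⁰ (FractionRing R)) ∧ I ≤ M}.Finite) :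
    ∀ I : Ideal R, I ≠ ⊥ → ∃ (S : Finset (Ideal R)) (t : Ideal R → ℕ),
      ↑S = {M : Ideal R | M.IsMaximal ∧
        ¬ IsUnit (M : FractionalIdeal R⁰ (FractionRing R)) ∧ I ≤ M} ∧
      (I : FractionalIdeal R⁰ (FractionRing R)) =
        divClos R I * ∏ M ∈ S, (M : FractionalIdeal R⁰ (FractionRing R)) ^ (t M) := by
  classical
  intro I hI
  obtain ⟨V, hV, hVle, hV0⟩ := WFaux.exists_divClos hI
  set S : Finset (Ideal R) := (hfin I hI).toFinset with hS
  set t : Ideal R → ℕ := fun M =>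
    if h : M.IsMaximal then WFaux.expAt M I h.isPrime - WFaux.expAt M V h.isPrime else 0 with ht
  have hmem : ∀ M : Ideal R, M ∈ S ↔ (M.IsMaximal ∧
      ¬ IsUnit (M : FractionalIdeal R⁰ (FractionRing R)) ∧ I ≤ M) := by
    intro M
    rw [hS, Set.Finite.mem_toFinset]
    rfl
  have key : I = V * ∏ M ∈ S, M ^ t M := by
    apply WFaux.eq_of_mapAt_eq
    intro P hP
    rw [WFaux.mapAt_mul, WFaux.mapAt_prod]
    by_cases hIP : I ≤ P
    · by_cases hUP : IsUnit (P : FractionalIdeal R⁰ (FractionRing R))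
      · have hprod : ∏ M ∈ S, MapAt R P hP.isPrime (M ^ t M) = 1 := by
          apply Finset.prod_eq_one
          intro M hM
          obtain ⟨hMmax, hMU, hIM⟩ := (hmem M).mp hM
          have hne : M ≠ P := fun h => hMU (h ▸ hUP)
          rw [WFaux.mapAt_pow, WFaux.mapAt_maximal_ne hP hMmax hne, Ideal.top_pow,
            Ideal.one_eq_top]
        rw [hprod, mul_one, WFaux.mapAt_divClos_eq hAD hI hV hP hUP]
      · have hPS : P ∈ S := (hmem P).mpr ⟨hP, hUP, hIP⟩
        have heI := WFaux.expAt_spec hAD hP hI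
        have heV := WFaux.expAt_spec hAD hP hV0
        have hlev : WFaux.expAt P V hP.isPrime ≤ WFaux.expAt P I hP.isPrime := by
          apply WFaux.expAt_pow_le hAD hP
          rw [← heI, ← heV]
          exact WFaux.mapAt_mono _ hVle
        have hprod : ∏ M ∈ S, MapAt R P hP.isPrime (M ^ t M)
              = MapAt R P hP.isPrime (P ^ t P) := by
          apply Finset.prod_eq_single_of_mem P hPS
          intro M hM hne
          obtain ⟨hMmax, _, _⟩ := (hmem M).mp hM
          rw [WFaux.mapAt_pow, WFaux.mapAt_maximal_ne hP hMmax hne, Ideal.top_pow,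
            Ideal.one_eq_top]
        have htP : t P = WFaux.expAt P I hP.isPrime - WFaux.expAt P V hP.isPrime := by
          simp only [ht]
          rw [dif_pos hP]
        rw [hprod, WFaux.mapAt_pow, heI, heV, ← pow_add]
        congr 1
        omega
    · have hmapI : MapAt R P hP.isPrime I = ⊤ := WFaux.mapAt_eq_top hP hIP
      have hmapV : MapAt R P hP.isPrime V = ⊤ :=
        eq_top_iff.mpr (hmapI ▸ WFaux.mapAt_mono _ hVle)
      have hprod : ∏ M ∈ S, MapAt R P hP.isPrime (M ^ t M) = 1 := by
        apply Finset.prod_eq_one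
        intro M hM
        obtain ⟨hMmax, _, hIM⟩ := (hmem M).mp hM
        have hne : M ≠ P := fun h => hIP (h ▸ hIM)
        rw [WFaux.mapAt_pow, WFaux.mapAt_maximal_ne hP hMmax hne, Ideal.top_pow,
          Ideal.one_eq_top]
      rw [hmapI, hmapV, hprod, mul_one]
  refine ⟨S, t, ?_, ?_⟩
  · rw [hS]
    exact Set.Finite.coe_toFinset _
  · rw [← hV, ← WFaux.coe_prod_pow, ← FractionalIdeal.coeIdeal_mul, ← key]
end
end
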